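/- arXiv:2105.12664 — 5 statements merged into one kernel-verified Lean document; each statement's English description precedes it below -/
import Mathlib

section
/- Let n ≥ 1 and let A be an n-by-n reciprocal matrix. Then the characteristic polynomial of A equals ∏_{j=1}^{n} (X − 2cos(jπ/(n+1))); in particular, the spectrum of A is exactly {2cos(jπ/(n+1)) : j = 1, …, n}, and all n eigenvalues of A are simple. -/
/-!
Expanding `det (X - A)` along its first row and then along the first column of the
remaining minor gives the three-term recurrence `χ_{k+2} = X χ_{k+1} - a₁₂ a₂₁ χ_k = X χ_{k+1} - χ_k`
for the characteristic polynomials of the trailing principal submatrices, so `χ_A` is the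
rescaled Chebyshev polynomial `S_n`, for which `S_n (2 cos θ) sin θ = sin ((n + 1) θ)`.
Hence the `n` distinct numbers `2 cos (j π / (n + 1))`, `1 ≤ j ≤ n`, are roots of the monic
polynomial `χ_A` of degree `n`, which is therefore their product.
-/

open Matrix Polynomial

/-- A tridiagonal complex matrix with zero main diagonal whose symmetric
off-diagonal entries have pairwise products equal to one. -/
def IsReciprocal {n : ℕ} (A : Matrix (Fin n) (Fin n) ℂ) : Prop :=
  (∀ i j : Fin n, ((i : ℤ) - (j : ℤ)) ^ 2 ≠ 1 → A i j = 0) ∧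
  ∀ i j : Fin n, (j : ℕ) = (i : ℕ) + 1 → A i j * A j i = 1

theorem Polynomial.Monic.eq_prod_X_sub_C_of_injOn {R ι : Type*} [CommRing R] [IsDomain R]
    {p : R[X]} (hp : p.Monic) {s : Finset ι} {f : ι → R} (hf : Set.InjOn f s)
    (hcard : p.natDegree ≤ s.card) (hroot : ∀ i ∈ s, p.eval (f i) = 0) :
    p = ∏ i ∈ s, (X - C (f i)) := by
  classical
  have hroots : p.roots = (s.image f).val :=
    roots_eq_of_natDegree_le_card_of_ne_zero (by simpa using hroot)
      (by rwa [Finset.card_image_of_injOn hf]) hp.ne_zero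
  have hcard_roots : Multiset.card p.roots = p.natDegree := by
    refine le_antisymm (card_roots' p) ?_
    rwa [hroots, Finset.card_val, Finset.card_image_of_injOn hf]
  rw [← prod_multiset_X_sub_C_of_monic_of_roots_card_eq hp hcard_roots, hroots,
    ← Finset.prod_eq_multiset_prod, Finset.prod_image hf]

open Real in
theorem Polynomial.Chebyshev.S_real_eval_two_mul_cos_nat_mul_pi_div_eq_zero {n k : ℕ} (hk : k ≠ 0)
    (hkn : k ≤ n) : (S ℝ n).eval (2 * cos (k * π / (n + 1))) = 0 := by
  set θ := k * π / (n + 1)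
  have hθ_pos : 0 < θ := by positivity
  have hθ_lt : θ < π := by
    rw [div_lt_iff₀ (by positivity)]
    have : (k : ℝ) < n + 1 := by exact_mod_cast Nat.lt_succ_of_le hkn
    nlinarith [pi_pos]
  have hsin : sin ((((n : ℤ) : ℝ) + 1) * θ) = 0 := by
    rw [sin_eq_zero_iff]
    exact ⟨k, by simp only [θ, Int.cast_natCast]; field_simp⟩
  have key := S_two_mul_real_cos θ n
  rw [hsin] at key
  exact (mul_eq_zero.mp key).resolve_right (sin_pos_of_pos_of_lt_pi hθ_pos hθ_lt).ne'

open Real in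
theorem injOn_two_mul_cos_nat_mul_pi_div (n : ℕ) :
    Set.InjOn (fun k : ℕ => 2 * cos (k * π / (n + 1))) (Set.Iic (n + 1)) := by
  have hmaps : Set.MapsTo (fun k : ℕ => k * π / (n + 1)) (Set.Iic (n + 1)) (Set.Icc 0 π) := by
    intro k hk
    refine ⟨by positivity, ?_⟩
    rw [div_le_iff₀ (by positivity)]
    have : (k : ℝ) ≤ n + 1 := by exact_mod_cast hk
    nlinarith [pi_pos]
  intro a ha b hb hab
  have := injOn_cos (hmaps ha) (hmaps hb) (by simpa using hab)
  field_simp at this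
  exact_mod_cast this

theorem Matrix.det_succ_succ_of_tridiagonal_corner {R : Type*} [CommRing R] {k : ℕ}
    (M : Matrix (Fin (k + 2)) (Fin (k + 2)) R)
    (hrow : ∀ j : Fin k, M 0 j.succ.succ = 0) (hcol : ∀ i : Fin k, M i.succ.succ 0 = 0) :
    M.det = M 0 0 * (M.submatrix Fin.succ Fin.succ).det -
      M 0 1 * M 1 0 * ((M.submatrix Fin.succ Fin.succ).submatrix Fin.succ Fin.succ).det := by
  have hminor : (M.submatrix Fin.succ (Fin.succAbove 1)).det =
      M 1 0 * ((M.submatrix Fin.succ Fin.succ).submatrix Fin.succ Fin.succ).det := by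
    rw [det_succ_column_zero, Fin.sum_univ_succ]
    simp [hcol, Function.comp_def]
  rw [det_succ_row_zero, Fin.sum_univ_succ, Fin.sum_univ_succ]
  simp [hrow, hminor]
  ring

theorem Matrix.charmatrix_submatrix {R m n : Type*} [CommRing R] [DecidableEq m]
    [DecidableEq n] [Fintype m] [Fintype n] (M : Matrix n n R) {f : m → n}
    (hf : Function.Injective f) :
    (charmatrix M).submatrix f f = charmatrix (M.submatrix f f) := by
  ext i j : 1
  obtain rfl | h := eq_or_ne i j
  · simp
  · simp [h, hf.ne h]

namespace IsReciprocal

variable {n : ℕ} {A : Matrix (Fin n) (Fin n) ℂ}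

theorem apply_self (hA : IsReciprocal A) (i : Fin n) : A i i = 0 :=
  hA.1 i i (by simp)

theorem apply_eq_zero_of_add_two_le (hA : IsReciprocal A) {i j : Fin n}
    (h : (i : ℕ) + 2 ≤ j ∨ (j : ℕ) + 2 ≤ i) : A i j = 0 :=
  hA.1 i j fun hsq => by rcases h with h | h <;> nlinarith

theorem charmatrix_apply_eq_zero_of_add_two_le (hA : IsReciprocal A) {i j : Fin n}
    (h : (i : ℕ) + 2 ≤ j ∨ (j : ℕ) + 2 ≤ i) : charmatrix A i j = 0 := by
  have hij : i ≠ j := fun hij => by subst hij; omega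
  rw [charmatrix_apply_ne _ _ _ hij, hA.apply_eq_zero_of_add_two_le h, map_zero, neg_zero]

theorem submatrix_succ {A : Matrix (Fin (n + 1)) (Fin (n + 1)) ℂ} (hA : IsReciprocal A) :
    IsReciprocal (A.submatrix Fin.succ Fin.succ) :=
  ⟨fun i j h => hA.1 _ _ (by simpa using h), fun i j h => hA.2 _ _ (by simpa using h)⟩

theorem charpoly_eq_S : ∀ {n : ℕ} {A : Matrix (Fin n) (Fin n) ℂ}, IsReciprocal A →
    A.charpoly = Chebyshev.S ℂ n
  | 0, A, _ => by simp [charpoly]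
  | 1, A, hA => by simp [charpoly, hA.apply_self]
  | k + 2, A, hA => by
    have hprod : charmatrix A 0 1 * charmatrix A 1 0 = 1 := by
      simp [← C_mul, hA.2 0 1 (by simp)]
    rw [charpoly, det_succ_succ_of_tridiagonal_corner, hprod, charmatrix_apply_eq,
      hA.apply_self, charmatrix_submatrix _ (Fin.succ_injective _),
      charmatrix_submatrix _ (Fin.succ_injective _), ← charpoly, ← charpoly,
      charpoly_eq_S hA.submatrix_succ, charpoly_eq_S hA.submatrix_succ.submatrix_succ]
    · push_cast
      simp [Chebyshev.S_add_two]
    · exact fun j => hA.charmatrix_apply_eq_zero_of_add_two_le (by simp)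
    · exact fun i => hA.charmatrix_apply_eq_zero_of_add_two_le (by simp)

end IsReciprocal

theorem charpoly_spectrum_of_isReciprocal_general {n : ℕ}
    (A : Matrix (Fin n) (Fin n) ℂ) (hA : IsReciprocal A) :
    A.charpoly =
      ∏ j ∈ Finset.Icc 1 n,
        (Polynomial.X -
          Polynomial.C ((2 * Real.cos (j * Real.pi / (n + 1)) : ℝ) : ℂ)) ∧
    spectrum ℂ A =
      {z : ℂ | ∃ j ∈ Finset.Icc 1 n,
        z = ((2 * Real.cos (j * Real.pi / (n + 1)) : ℝ) : ℂ)} ∧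
    ∀ z : ℂ, A.charpoly.rootMultiplicity z ≤ 1 := by
  set r : ℕ → ℂ := fun j => ((2 * Real.cos (j * Real.pi / (n + 1)) : ℝ) : ℂ)
  have hinj : Set.InjOn r (Finset.Icc 1 n) :=
    Complex.ofReal_injective.comp_injOn <| (injOn_two_mul_cos_nat_mul_pi_div n).mono
      fun j hj => by rw [Finset.coe_Icc, Set.mem_Icc] at hj; exact Set.mem_Iic.mpr (by omega)
  have hcp : A.charpoly = ∏ j ∈ Finset.Icc 1 n, (X - C (r j)) := by
    refine A.charpoly_monic.eq_prod_X_sub_C_of_injOn hinj (by simp) fun j hj => ?_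
    rw [Finset.mem_Icc] at hj
    rw [hA.charpoly_eq_S, ← Chebyshev.complex_ofReal_eval_S,
      Chebyshev.S_real_eval_two_mul_cos_nat_mul_pi_div_eq_zero (by omega) hj.2, Complex.ofReal_zero]
  refine ⟨hcp, Set.ext fun z => ?_, fun z => ?_⟩
  · simp [mem_spectrum_iff_isRoot_charpoly, hcp, eval_prod, Finset.prod_eq_zero_iff,
      sub_eq_zero, r]
  · rw [hcp]
    exact rootMultiplicity_le_one_of_separable (separable_prod_X_sub_C_iff'.mpr hinj) z

/-- The characteristic polynomial of an `n`-by-`n` reciprocal matrix is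
`∏_{j=1}^{n} (X - 2cos(jπ/(n+1)))`; hence its spectrum is
`{2cos(jπ/(n+1)) : j = 1,…,n}` and all of its eigenvalues are simple. -/
theorem charpoly_spectrum_of_isReciprocal {n : ℕ} (hn : 1 ≤ n)
    (A : Matrix (Fin n) (Fin n) ℂ) (hA : IsReciprocal A) :
    A.charpoly =
      ∏ j ∈ Finset.Icc 1 n,
        (Polynomial.X -
          Polynomial.C ((2 * Real.cos (j * Real.pi / (n + 1)) : ℝ) : ℂ)) ∧
    spectrum ℂ A =
      {z : ℂ | ∃ j ∈ Finset.Icc 1 n,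
        z = ((2 * Real.cos (j * Real.pi / (n + 1)) : ℝ) : ℂ)} ∧
    ∀ z : ℂ, A.charpoly.rootMultiplicity z ≤ 1 :=
  charpoly_spectrum_of_isReciprocal_general A hA
end

section
/- Let A be an n-by-n reciprocal matrix and let k be a positive integer with k > (n+1)/2. Then the rank-k numerical range of A is empty: Λ_k(A) = ∅. -/
open Matrix Polynomial

/-- The rank-`k` numerical range `Λ_k(A)`: those `λ ∈ ℂ` with `PAP = λP` for some
orthogonal projection `P` of rank `k`. -/
def rankNumRange {n : ℕ} (A : Matrix (Fin n) (Fin n) ℂ) (k : ℕ) : Set ℂ :=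
  {lam | ∃ P : Matrix (Fin n) (Fin n) ℂ,
    P.IsHermitian ∧ P * P = P ∧ P.rank = k ∧ P * A * P = lam • P}

/-- A vector in the kernel of `A - λ•1` (for reciprocal `A`) vanishing at index `0`
is zero, by the tridiagonal recursion. -/
lemma recip_kernel_aux {n : ℕ} (A : Matrix (Fin n) (Fin n) ℂ) (hA : IsReciprocal A)
    (lam : ℂ) (x : Fin n → ℂ) (hx : (A - lam • 1).mulVec x = 0) (hn : 0 < n)
    (h0 : x ⟨0, hn⟩ = 0) : x = 0 := by
  have key : ∀ m : ℕ, ∀ i : Fin n, (i : ℕ) ≤ m → x i = 0 := by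
    intro m
    induction m with
    | zero =>
      intro i hi
      have : i = ⟨0, hn⟩ := Fin.ext (Nat.le_zero.mp hi)
      rw [this]; exact h0
    | succ m ih =>
      intro i hi
      rcases Nat.lt_or_ge (i : ℕ) (m + 1) with h | h
      · exact ih i (Nat.lt_succ_iff.mp h)
      have him : (i : ℕ) = m + 1 := le_antisymm hi h
      have hmn : m < n := lt_trans (by omega) i.isLt
      set j : Fin n := ⟨m, hmn⟩ with hj
      have hrow : (A - lam • 1).mulVec x j = 0 := congrFun hx j
      rw [Matrix.mulVec, dotProduct] at hrow
      have hji : j ≠ i := by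
        intro h'
        have := congrArg Fin.val h'
        simp [hj, him] at this
      have hsum : ∑ u, (A - lam • 1) j u * x u = A j i * x i := by
        rw [Finset.sum_eq_single i]
        · simp [Matrix.sub_apply, Matrix.smul_apply, Matrix.one_apply, hji]
        · intro u _ hu
          rcases Nat.lt_or_ge (u : ℕ) (m + 1) with h' | h'
          · rw [ih u (Nat.lt_succ_iff.mp h'), mul_zero]
          · have hu2 : (u : ℕ) ≥ m + 2 := by
              rcases Nat.lt_or_ge (u : ℕ) (m + 2) with h'' | h''
              · exfalso; apply hu; apply Fin.ext; omega
              · exact h''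
            have hju : j ≠ u := by
              intro h'
              have := congrArg Fin.val h'
              simp [hj] at this
              omega
            have hAju : A j u = 0 := by
              apply hA.1 j u
              intro hsq
              have hui : ((u : ℕ) : ℤ) ≥ (m : ℤ) + 2 := by exact_mod_cast hu2
              have : ((j : ℤ) - (u : ℤ)) ^ 2 ≥ 4 := by
                have : (j : ℤ) = (m : ℤ) := by simp [hj]
                nlinarith
              omega
            simp [Matrix.sub_apply, Matrix.smul_apply, Matrix.one_apply, hju, hAju]
        · intro h; exact absurd (Finset.mem_univ i) h
      rw [hsum] at hrow
      have hAji : A j i ≠ 0 := by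
        apply left_ne_zero_of_mul_eq_one (b := A i j)
        apply hA.2 j i
        simp [hj, him]
      exact (mul_eq_zero.mp hrow).resolve_left hAji
  funext i
  exact key i i le_rfl

/-- For a reciprocal `n`-by-`n` matrix, the rank-`k` numerical range is empty
whenever `k > (n+1)/2`. -/
theorem rankNumRange_eq_empty_of_isReciprocal {n : ℕ}
    (A : Matrix (Fin n) (Fin n) ℂ) (hA : IsReciprocal A)
    (k : ℕ) (hk : 1 ≤ k) (hk2 : (k : ℝ) > (n + 1) / 2) :
    rankNumRange A k = ∅ := by
  ext lam
  simp only [Set.mem_empty_iff_false, iff_false, rankNumRange, Set.mem_setOf_eq]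
  rintro ⟨P, _hH, hP2, hPr, hPAP⟩
  have hkn : k ≤ n := by
    rw [← hPr]
    simpa using P.rank_le_card_width
  have hn : 0 < n := lt_of_lt_of_le hk hkn
  set B := A - lam • (1 : Matrix (Fin n) (Fin n) ℂ) with hB
  have hPBP : P * B * P = 0 := by
    have h1 : P * (lam • (1 : Matrix (Fin n) (Fin n) ℂ)) * P = lam • P := by
      rw [Matrix.mul_smul, Matrix.mul_one, Matrix.smul_mul, hP2]
    rw [hB, Matrix.mul_sub, Matrix.sub_mul, hPAP, h1, sub_self]
  set f := B.mulVecLin with hf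
  set p := P.mulVecLin with hp
  set W := LinearMap.range p with hW
  have hWk : Module.finrank ℂ W = k := hPr
  -- kernel of f has dimension at most 1
  have hkerf : Module.finrank ℂ (LinearMap.ker f) ≤ 1 := by
    have hinj : Function.Injective
        ((LinearMap.proj (⟨0, hn⟩ : Fin n) : (Fin n → ℂ) →ₗ[ℂ] ℂ).comp
          (LinearMap.ker f).subtype) := by
      rw [← LinearMap.ker_eq_bot]
      rw [eq_bot_iff]
      rintro ⟨x, hx⟩ hx0
      have hx' : B.mulVec x = 0 := hx
      have hx0' : x ⟨0, hn⟩ = 0 := hx0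
      have := recip_kernel_aux A hA lam x hx' hn hx0'
      simpa [Submodule.mem_bot, Subtype.ext_iff] using this
    calc Module.finrank ℂ (LinearMap.ker f)
        ≤ Module.finrank ℂ ℂ := LinearMap.finrank_le_finrank_of_injective hinj
      _ = 1 := Module.finrank_self ℂ
  -- rank-nullity for p : k + dim ker p = n
  have hrn : k + Module.finrank ℂ (LinearMap.ker p) = n := by
    have := LinearMap.finrank_range_add_finrank_ker p
    rwa [← hW, hWk, Module.finrank_fin_fun] at this
  -- upper bound : range of (B*P) lies in ker p
  have hle : LinearMap.range (B * P).mulVecLin ≤ LinearMap.ker p := by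
    rintro v ⟨u, rfl⟩
    have h0 : (P * (B * P)).mulVecLin u = 0 := by
      rw [← Matrix.mul_assoc, hPBP]
      simp
    rw [Matrix.mulVecLin_mul] at h0
    exact h0
  have hub : Module.finrank ℂ (LinearMap.range (B * P).mulVecLin) ≤
      Module.finrank ℂ (LinearMap.ker p) := Submodule.finrank_mono hle
  -- lower bound : dim range (B*P) ≥ k - 1
  have hcomp : LinearMap.range (B * P).mulVecLin = W.map f := by
    rw [Matrix.mulVecLin_mul, LinearMap.range_comp, ← hW, ← hf]
  have hdr : Module.finrank ℂ (W.map f) +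
      Module.finrank ℂ (LinearMap.ker (f.domRestrict W)) = k := by
    have := LinearMap.finrank_range_add_finrank_ker (f.domRestrict W)
    rwa [LinearMap.range_domRestrict, hWk] at this
  have hkd : Module.finrank ℂ (LinearMap.ker (f.domRestrict W)) ≤ 1 := by
    have hmap : (LinearMap.ker (f.domRestrict W)).map W.subtype ≤ LinearMap.ker f := by
      rintro v ⟨⟨w, hwW⟩, hw, rfl⟩
      simpa [LinearMap.mem_ker] using hw
    calc Module.finrank ℂ (LinearMap.ker (f.domRestrict W))
        = Module.finrank ℂ ((LinearMap.ker (f.domRestrict W)).map W.subtype) :=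
          (Submodule.finrank_map_subtype_eq W _).symm
      _ ≤ Module.finrank ℂ (LinearMap.ker f) := Submodule.finrank_mono hmap
      _ ≤ 1 := hkerf
  rw [hcomp] at hub
  -- combine
  have h2k : 2 * k > n + 1 := by
    have : (2 * k : ℝ) > (n : ℝ) + 1 := by
      rw [gt_iff_lt, div_lt_iff₀ (by norm_num : (0:ℝ) < 2)] at hk2
      linarith
    exact_mod_cast this
  omega
end

section
/- Let A be an n-by-n reciprocal matrix (n ≥ 2) and let θ ∈ ℝ. The Hermitian matrix Re(e^{iθ}A) has an eigenvalue of algebraic multiplicity at least 2 if and only if cos θ = 0 and there exists k ∈ {1, …, n−1} with ξ_k = 0 such that the upper-left k-by-k principal submatrix and the lower-right (n−k)-by-(n−k) principal submatrix of Im A have a common eigenvalue. (Equivalently: all multiple tangent lines of the Kippenhahn curve of A are horizontal, and they occur exactly under the stated condition.) -/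
open Matrix Polynomial

/-- The Hermitian matrix `Re (e^{iθ} A) = (e^{iθ}A + (e^{iθ}A)*)/2`. -/
noncomputable def RePart {n : ℕ} (θ : ℝ) (A : Matrix (Fin n) (Fin n) ℂ) :
    Matrix (Fin n) (Fin n) ℂ :=
  (2 : ℂ)⁻¹ • (Complex.exp (θ * Complex.I) • A + (Complex.exp (θ * Complex.I) • A)ᴴ)

/-- The Hermitian matrix `Im A = (A - A*)/(2i)`. -/
noncomputable def imPart {n : ℕ} (A : Matrix (Fin n) (Fin n) ℂ) :
    Matrix (Fin n) (Fin n) ℂ :=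
  (2 * Complex.I)⁻¹ • (A - Aᴴ)

/-- Upper-left `k`-by-`k` principal submatrix. -/
def ulBlock {n : ℕ} (M : Matrix (Fin n) (Fin n) ℂ) (k : ℕ) (hk : k ≤ n) :
    Matrix (Fin k) (Fin k) ℂ :=
  M.submatrix (Fin.castLE hk) (Fin.castLE hk)

/-- Lower-right `(n-k)`-by-`(n-k)` principal submatrix. -/
def lrBlock {n : ℕ} (M : Matrix (Fin n) (Fin n) ℂ) (k : ℕ) (hk : k ≤ n) :
    Matrix (Fin (n - k)) (Fin (n - k)) ℂ :=
  fun i j => M ⟨k + i.1, by have := i.2; omega⟩ ⟨k + j.1, by have := j.2; omega⟩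

/-!
`Re (e^{iθ} A)` is a Hermitian tridiagonal matrix (Hermitian upper Hessenberg matrices are exactly
the Hermitian tridiagonal ones). Such a matrix `M` has a multiple eigenvalue exactly when some
off-diagonal entry `M (k-1) k` vanishes and the two diagonal blocks it separates share an
eigenvalue. If the entry vanishes, the characteristic polynomial of `M` is the product of those of
the blocks. Conversely, the eigenspace of a multiple eigenvalue `μ` has dimension at least two,
since `M` is diagonalizable. Let `k` be least such that some eigenvector `v` vanishes from index
`k` on. Row `k` of `M v = μ v` reads `M k (k-1) * v (k-1) = 0`, and `v (k-1) ≠ 0` by minimality,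
so `M` splits at `k` and `v` restricts to an eigenvector of the upper block. A second eigenvector,
chosen to vanish at `k - 1`, cannot vanish from `k - 1` on, again by minimality, so it restricts
to an eigenvector of the lower block.

For a reciprocal `A` with `a = A (k-1) k` and `b = A k (k-1)`, one has `ab = 1`, so
`|e^{iθ} a + conj (e^{iθ} b)|² = (|a| - |b|)² + 4 cos² θ`. The entry of `Re (e^{iθ} A)` at
`(k-1, k)` therefore vanishes iff `cos θ = 0` and `ξ_k = 0`. When `cos θ = 0`,
`Re (e^{iθ} A) = -sin θ • Im A`, a nonzero multiple of `Im A`.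
-/

open Module Module.End

namespace Matrix

section Eigenvectors

variable {ι : Type*} [Fintype ι]

theorem submatrix_mulVec_comp_eq_smul {κ R : Type*} [Fintype κ] [CommSemiring R]
    {M : Matrix ι ι R} {e : κ → ι} (he : Function.Injective e)
    (hM : ∀ i j, j ∉ Set.range e → M (e i) j = 0) {v : ι → R} {μ : R}
    (hv : M *ᵥ v = μ • v) : M.submatrix e e *ᵥ (v ∘ e) = μ • (v ∘ e) := by
  ext i
  change _ = (μ • v) (e i)
  rw [← hv]
  exact Fintype.sum_of_injective e he _ _ (fun j hj => by simp [hM i j hj]) fun _ => rfl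

variable [DecidableEq ι]

theorem mem_spectrum_of_mulVec_eq_smul {K : Type*} [Field K] {M : Matrix ι ι K} {v : ι → K}
    {μ : K} (hv0 : v ≠ 0) (hv : M *ᵥ v = μ • v) : μ ∈ spectrum K M := by
  rw [← spectrum_toLin', ← hasEigenvalue_iff_mem_spectrum]
  exact hasEigenvalue_of_hasEigenvector ⟨mem_eigenspace_iff.mpr hv, hv0⟩

variable {𝕜 : Type*} [RCLike 𝕜] {M : Matrix ι ι 𝕜}

theorem IsHermitian.finrank_eigenspace_toEuclideanLin (hM : M.IsHermitian) (μ : 𝕜) :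
    finrank 𝕜 (eigenspace (toEuclideanLin M) μ) = M.charpoly.rootMultiplicity μ := by
  rw [← (isSymmetric_toEuclideanLin_iff.mpr hM).isFinitelySemisimple
      |>.maxGenEigenspace_eq_eigenspace,
    LinearMap.finrank_maxGenEigenspace_eq, toEuclideanLin_eq_toLin_orthonormal, charpoly_toLin]

theorem IsHermitian.exists_mulVec_eq_smul_of_two_le_rootMultiplicity (hM : M.IsHermitian)
    {μ : 𝕜} (hμ : 2 ≤ M.charpoly.rootMultiplicity μ) (φ : (ι → 𝕜) →ₗ[𝕜] 𝕜) :
    ∃ u, u ≠ 0 ∧ M *ᵥ u = μ • u ∧ φ u = 0 := by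
  set E := eigenspace (toEuclideanLin M) μ
  let ψ : E →ₗ[𝕜] 𝕜 := φ ∘ₗ (WithLp.linearEquiv 2 𝕜 (ι → 𝕜)).toLinearMap ∘ₗ E.subtype
  have hrange : finrank 𝕜 (LinearMap.range ψ) ≤ 1 := (Submodule.finrank_le _).trans (by simp)
  have hker : 0 < finrank 𝕜 (LinearMap.ker ψ) := by
    have := ψ.finrank_range_add_finrank_ker
    rw [hM.finrank_eigenspace_toEuclideanLin] at this
    omega
  obtain ⟨⟨x, hxE⟩, hxψ, hx0⟩ :=
    Submodule.exists_mem_ne_zero_of_ne_bot (Submodule.one_le_finrank_iff.mp hker)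
  refine ⟨x.ofLp, by simpa using hx0, ?_, hxψ⟩
  rw [mem_eigenspace_iff] at hxE
  simpa using congrArg WithLp.ofLp hxE

end Eigenvectors

def IsUpperHessenberg {m : ℕ} {R : Type*} [Zero R] (M : Matrix (Fin m) (Fin m) R) : Prop :=
  ∀ i j : Fin m, (j : ℕ) + 1 < i → M i j = 0

namespace IsUpperHessenberg

variable {m k : ℕ}

theorem apply_eq_zero_of_lt_le {R : Type*} [Zero R] {M : Matrix (Fin m) (Fin m) R}
    (hH : M.IsUpperHessenberg) (hk : k < m) (hz : M ⟨k, hk⟩ ⟨k - 1, Nat.sub_lt_of_lt hk⟩ = 0)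
    (i j : Fin m) (hj : (j : ℕ) < k) (hi : k ≤ (i : ℕ)) : M i j = 0 := by
  by_cases hij : (i : ℕ) = k ∧ (j : ℕ) = k - 1
  · convert hz using 2 <;> ext <;> simp [hij]
  · exact hH i j (by omega)

theorem mulVec_apply_eq_of_forall_le_eq_zero {R : Type*} [NonUnitalNonAssocSemiring R]
    {M : Matrix (Fin m) (Fin m) R} (hH : M.IsUpperHessenberg) (hk : k < m) {v : Fin m → R}
    (hv : ∀ i : Fin m, k ≤ (i : ℕ) → v i = 0) :
    (M *ᵥ v) ⟨k, hk⟩ =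
      M ⟨k, hk⟩ ⟨k - 1, Nat.sub_lt_of_lt hk⟩ * v ⟨k - 1, Nat.sub_lt_of_lt hk⟩ := by
  rw [mulVec, dotProduct]
  refine Fintype.sum_eq_single _ fun j hj => ?_
  by_cases hjk : (j : ℕ) < k
  · have : (j : ℕ) ≠ k - 1 := fun h => hj (Fin.ext h)
    rw [hH _ _ (by simp; omega), zero_mul]
  · rw [hv j (by omega), mul_zero]

variable {M : Matrix (Fin m) (Fin m) ℂ} (hH : M.IsUpperHessenberg) (hk : k < m)
  (hz : M ⟨k, hk⟩ ⟨k - 1, Nat.sub_lt_of_lt hk⟩ = 0)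
include hH hz

theorem charpoly_eq_ulBlock_mul_lrBlock :
    M.charpoly = (ulBlock M k hk.le).charpoly * (lrBlock M k hk.le).charpoly := by
  let e : Fin k ⊕ Fin (m - k) ≃ Fin m := finSumFinEquiv.trans (finCongr (by omega))
  have hblocks : reindex e.symm e.symm M =
      fromBlocks (ulBlock M k hk.le) (reindex e.symm e.symm M).toBlocks₁₂ 0
        (lrBlock M k hk.le) := by
    rw [← fromBlocks_toBlocks (reindex e.symm e.symm M)]
    congr 1
    ext i j
    exact hH.apply_eq_zero_of_lt_le hk hz _ _ (by simp [e]) (by simp [e])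
  rw [← charpoly_reindex e.symm M, hblocks, charpoly_fromBlocks_zero₂₁]

theorem mem_spectrum_lrBlock {v : Fin m → ℂ} {μ : ℂ} (hv : M *ᵥ v = μ • v) {i : Fin m}
    (hi : k ≤ (i : ℕ)) (hvi : v i ≠ 0) : μ ∈ spectrum ℂ (lrBlock M k hk.le) := by
  let e : Fin (m - k) → Fin m := fun a => ⟨k + a, by omega⟩
  have he : Function.Injective e := fun a b h => Fin.ext (by simpa [e] using h)
  have hrange (j : Fin m) (hj : j ∉ Set.range e) : (j : ℕ) < k := by
    by_contra h
    exact hj ⟨⟨j - k, by omega⟩, Fin.ext (by simp [e]; omega)⟩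
  refine mem_spectrum_of_mulVec_eq_smul (v := v ∘ e) (fun h => hvi ?_)
    (submatrix_mulVec_comp_eq_smul he
      (fun a j hj => hH.apply_eq_zero_of_lt_le hk hz _ j (hrange j hj) (by simp [e])) hv)
  simpa [e, show k + (i - k) = i by omega] using congrFun h ⟨i - k, by omega⟩

theorem mem_spectrum_ulBlock_of_isHermitian (hM : M.IsHermitian) {v : Fin m → ℂ}
    {μ : ℂ} (hv : M *ᵥ v = μ • v) {i : Fin m} (hi : (i : ℕ) < k) (hvi : v i ≠ 0) :
    μ ∈ spectrum ℂ (ulBlock M k hk.le) := by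
  have hrange (j : Fin m) (hj : j ∉ Set.range (Fin.castLE hk.le)) : k ≤ (j : ℕ) := by
    by_contra h
    exact hj ⟨⟨j, by omega⟩, rfl⟩
  refine mem_spectrum_of_mulVec_eq_smul (v := v ∘ Fin.castLE hk.le)
    (fun h => hvi (congrFun h ⟨i, hi⟩))
    (submatrix_mulVec_comp_eq_smul (Fin.castLE_injective _) (fun a j hj => ?_) hv)
  rw [← hM.apply, hH.apply_eq_zero_of_lt_le hk hz j _ a.2 (hrange j hj), star_zero]

end IsUpperHessenberg

theorem IsHermitian.exists_split_of_two_le_rootMultiplicity {m : ℕ}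
    {M : Matrix (Fin m) (Fin m) ℂ} (hM : M.IsHermitian) (hH : M.IsUpperHessenberg) {μ : ℂ}
    (hμ : 2 ≤ M.charpoly.rootMultiplicity μ) :
    ∃ k, ∃ _ : 1 ≤ k, ∃ hk : k < m, M ⟨k, hk⟩ ⟨k - 1, Nat.sub_lt_of_lt hk⟩ = 0 ∧
      μ ∈ spectrum ℂ (ulBlock M k hk.le) ∧ μ ∈ spectrum ℂ (lrBlock M k hk.le) := by
  classical
  have hvanish : ∃ t, ∃ v : Fin m → ℂ,
      v ≠ 0 ∧ M *ᵥ v = μ • v ∧ ∀ i : Fin m, t ≤ (i : ℕ) → v i = 0 := by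
    obtain ⟨v, hv0, hv, -⟩ := hM.exists_mulVec_eq_smul_of_two_le_rootMultiplicity hμ 0
    exact ⟨m, v, hv0, hv, fun i hi => absurd i.2 (by omega)⟩
  set k := Nat.find hvanish
  obtain ⟨v, hv0, hv, hvk⟩ := Nat.find_spec hvanish
  have hk0 : k ≠ 0 := fun h => hv0 (funext fun i => hvk i (by omega))
  have hkm : k ≤ m := Nat.find_min' hvanish ⟨v, hv0, hv, fun i hi => absurd i.2 (by omega)⟩
  have hmin (u : Fin m → ℂ) (hu0 : u ≠ 0) (hu : M *ᵥ u = μ • u)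
      (hk1 : u ⟨k - 1, by omega⟩ = 0) : ∃ i : Fin m, k ≤ (i : ℕ) ∧ u i ≠ 0 := by
    by_contra! h
    refine Nat.find_min hvanish (by omega : k - 1 < k) ⟨u, hu0, hu, fun i hi => ?_⟩
    rcases (show (i : ℕ) = k - 1 ∨ k ≤ i by omega) with hi | hi
    · rwa [show i = ⟨k - 1, by omega⟩ from Fin.ext hi]
    · exact h i hi
  have hvk1 : v ⟨k - 1, by omega⟩ ≠ 0 := fun h0 => by
    obtain ⟨i, hi, hvi⟩ := hmin v hv0 hv h0
    exact hvi (hvk i hi)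
  obtain ⟨u, hu0, hu, huk1⟩ :=
    hM.exists_mulVec_eq_smul_of_two_le_rootMultiplicity hμ (LinearMap.proj ⟨k - 1, by omega⟩)
  obtain ⟨i, hik, hui⟩ := hmin u hu0 hu huk1
  have hk : k < m := hik.trans_lt i.2
  have hz : M ⟨k, hk⟩ ⟨k - 1, Nat.sub_lt_of_lt hk⟩ = 0 := by
    have hrow := hH.mulVec_apply_eq_of_forall_le_eq_zero hk hvk
    rw [hv, Pi.smul_apply, hvk _ le_rfl, smul_zero] at hrow
    exact (mul_eq_zero.mp hrow.symm).resolve_right hvk1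
  exact ⟨k, by omega, hk, hz, hH.mem_spectrum_ulBlock_of_isHermitian hk hz hM hv (i := ⟨k - 1, _⟩)
    (by simp; omega) hvk1, hH.mem_spectrum_lrBlock hk hz hu hik hui⟩

theorem IsHermitian.exists_two_le_rootMultiplicity_iff {m : ℕ} {M : Matrix (Fin m) (Fin m) ℂ}
    (hM : M.IsHermitian) (hH : M.IsUpperHessenberg) :
    (∃ μ : ℂ, 2 ≤ M.charpoly.rootMultiplicity μ) ↔
      ∃ k, ∃ _ : 1 ≤ k, ∃ hk : k < m, M ⟨k - 1, Nat.sub_lt_of_lt hk⟩ ⟨k, hk⟩ = 0 ∧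
        ∃ μ, μ ∈ spectrum ℂ (ulBlock M k hk.le) ∧ μ ∈ spectrum ℂ (lrBlock M k hk.le) := by
  have hsymm {k : ℕ} (hk : k < m) : M ⟨k - 1, Nat.sub_lt_of_lt hk⟩ ⟨k, hk⟩ = 0 ↔
      M ⟨k, hk⟩ ⟨k - 1, Nat.sub_lt_of_lt hk⟩ = 0 := by
    rw [← hM.apply, star_eq_zero]
  constructor
  · rintro ⟨μ, hμ⟩
    obtain ⟨k, h1, hk, hz, hul, hlr⟩ := hM.exists_split_of_two_le_rootMultiplicity hH hμ
    exact ⟨k, h1, hk, (hsymm hk).2 hz, μ, hul, hlr⟩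
  · rintro ⟨k, _, hk, hz, μ, hul, hlr⟩
    have hul' := (rootMultiplicity_pos (charpoly_monic _).ne_zero).2
      (mem_spectrum_iff_isRoot_charpoly.1 hul)
    have hlr' := (rootMultiplicity_pos (charpoly_monic _).ne_zero).2
      (mem_spectrum_iff_isRoot_charpoly.1 hlr)
    refine ⟨μ, ?_⟩
    rw [hH.charpoly_eq_ulBlock_mul_lrBlock hk ((hsymm hk).1 hz),
      rootMultiplicity_mul (mul_ne_zero (charpoly_monic _).ne_zero (charpoly_monic _).ne_zero)]
    omega

end Matrix

theorem exists_mem_spectrum_smul_iff {𝕜 A B : Type*} [Field 𝕜] [Ring A] [Algebra 𝕜 A] [Ring B]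
    [Algebra 𝕜 B] {c : 𝕜} (hc : c ≠ 0) (a : A) (b : B) :
    (∃ μ, μ ∈ spectrum 𝕜 (c • a) ∧ μ ∈ spectrum 𝕜 (c • b)) ↔
      ∃ μ, μ ∈ spectrum 𝕜 a ∧ μ ∈ spectrum 𝕜 b := by
  have hma (μ : 𝕜) : c • μ ∈ spectrum 𝕜 (c • a) ↔ μ ∈ spectrum 𝕜 a :=
    spectrum.smul_mem_smul_iff (r := Units.mk0 c hc)
  have hmb (μ : 𝕜) : c • μ ∈ spectrum 𝕜 (c • b) ↔ μ ∈ spectrum 𝕜 b :=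
    spectrum.smul_mem_smul_iff (r := Units.mk0 c hc)
  constructor
  · rintro ⟨μ, ha, hb⟩
    refine ⟨c⁻¹ • μ, (hma _).1 ?_, (hmb _).1 ?_⟩ <;> rwa [smul_inv_smul₀ hc]
  · rintro ⟨μ, ha, hb⟩
    exact ⟨c • μ, (hma μ).2 ha, (hmb μ).2 hb⟩

theorem Complex.normSq_exp_mul_add_star_exp_mul {a b : ℂ} (hab : a * b = 1) (θ : ℝ) :
    normSq (exp (θ * I) * a + star (exp (θ * I) * b)) =
      (‖a‖ - ‖b‖) ^ 2 + (2 * Real.cos θ) ^ 2 := by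
  have he : normSq (exp (θ * I)) = 1 := by
    rw [normSq_eq_norm_sq, norm_exp_ofReal_mul_I, one_pow]
  have hee : (exp (θ * I) * exp (θ * I)).re = Real.cos (2 * θ) := by
    rw [← exp_add, ← exp_ofReal_mul_I_re]
    push_cast
    ring_nf
  have hnorm : ‖a‖ * ‖b‖ = 1 := by rw [← norm_mul, hab, norm_one]
  rw [normSq_add, star_def, conj_conj, normSq_conj, normSq_mul, normSq_mul, he,
    mul_mul_mul_comm, hab, mul_one, hee, normSq_eq_norm_sq, normSq_eq_norm_sq, Real.cos_two_mul]
  linear_combination 2 * hnorm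

section Reciprocal

variable {n : ℕ}

theorem ulBlock_smul (c : ℂ) (M : Matrix (Fin n) (Fin n) ℂ) (k : ℕ) (hk : k ≤ n) :
    ulBlock (c • M) k hk = c • ulBlock M k hk :=
  rfl

theorem lrBlock_smul (c : ℂ) (M : Matrix (Fin n) (Fin n) ℂ) (k : ℕ) (hk : k ≤ n) :
    lrBlock (c • M) k hk = c • lrBlock M k hk :=
  rfl

theorem rePart_apply (θ : ℝ) (A : Matrix (Fin n) (Fin n) ℂ) (i j : Fin n) :
    RePart θ A i j = 2⁻¹ * (Complex.exp (θ * Complex.I) * A i j +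
      star (Complex.exp (θ * Complex.I) * A j i)) := by
  simp [RePart]

theorem isHermitian_rePart (θ : ℝ) (A : Matrix (Fin n) (Fin n) ℂ) :
    (RePart θ A).IsHermitian := by
  refine IsHermitian.ext fun i j => ?_
  simp only [rePart_apply, star_mul', star_add, star_star, star_inv₀, star_ofNat]
  ring

theorem rePart_eq_smul_imPart {θ : ℝ} (hc : Real.cos θ = 0) (A : Matrix (Fin n) (Fin n) ℂ) :
    RePart θ A = (-Real.sin θ : ℂ) • imPart A := by
  have he : Complex.exp (θ * Complex.I) = Real.sin θ * Complex.I := by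
    rw [Complex.exp_mul_I, ← Complex.ofReal_cos, ← Complex.ofReal_sin, hc]
    simp
  ext i j
  simp [RePart, imPart, he, -Complex.ofReal_sin]
  ring

variable {A : Matrix (Fin n) (Fin n) ℂ}

theorem IsReciprocal.isUpperHessenberg_rePart (hA : IsReciprocal A) (θ : ℝ) :
    (RePart θ A).IsUpperHessenberg := by
  intro i j hij
  rw [rePart_apply, hA.1 i j (by nlinarith), hA.1 j i (by nlinarith)]
  simp

theorem IsReciprocal.rePart_apply_eq_zero_iff (hA : IsReciprocal A) (θ : ℝ) {k : ℕ}
    (h1 : 1 ≤ k) (hk : k < n) :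
    RePart θ A ⟨k - 1, Nat.sub_lt_of_lt hk⟩ ⟨k, hk⟩ = 0 ↔ Real.cos θ = 0 ∧
      ‖A ⟨k - 1, Nat.sub_lt_of_lt hk⟩ ⟨k, hk⟩‖ = ‖A ⟨k, hk⟩ ⟨k - 1, Nat.sub_lt_of_lt hk⟩‖ := by
  rw [rePart_apply, mul_eq_zero, or_iff_right (by norm_num), ← Complex.normSq_eq_zero,
    Complex.normSq_exp_mul_add_star_exp_mul (hA.2 _ _ (by simp; omega)), sq, sq,
    mul_self_add_mul_self_eq_zero, sub_eq_zero, mul_eq_zero, or_iff_right two_ne_zero, and_comm]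

end Reciprocal

/-- For a reciprocal matrix `A`, `Re (e^{iθ}A)` has a multiple eigenvalue iff
`cos θ = 0` and for some `k` one has `ξ_k = 0` while the upper-left `k`-by-`k`
and lower-right `(n-k)`-by-`(n-k)` principal submatrices of `Im A` share an
eigenvalue. -/
theorem rePart_multiple_eigenvalue_iff {n : ℕ}
    (A : Matrix (Fin n) (Fin n) ℂ) (hA : IsReciprocal A) (θ : ℝ) :
    (∃ μ : ℂ, 2 ≤ (RePart θ A).charpoly.rootMultiplicity μ) ↔
      (Real.cos θ = 0 ∧
        ∃ k : ℕ, ∃ _h1 : 1 ≤ k, ∃ hk : k < n,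
          (‖A ⟨k - 1, by omega⟩ ⟨k, hk⟩‖ -
            ‖A ⟨k, hk⟩ ⟨k - 1, by omega⟩‖) ^ 2 / 4 = 0 ∧
          ∃ μ : ℂ,
            μ ∈ spectrum ℂ (ulBlock (imPart A) k hk.le) ∧
            μ ∈ spectrum ℂ (lrBlock (imPart A) k hk.le)) := by
  rw [(isHermitian_rePart θ A).exists_two_le_rootMultiplicity_iff (hA.isUpperHessenberg_rePart θ)]
  have hsin (hcos : Real.cos θ = 0) : (-Real.sin θ : ℂ) ≠ 0 := by
    rw [neg_ne_zero, Complex.ofReal_ne_zero]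
    intro h
    simpa [h, hcos] using Real.sin_sq_add_cos_sq θ
  constructor
  · rintro ⟨k, h1, hk, hz, hcommon⟩
    obtain ⟨hcos, hnorm⟩ := (hA.rePart_apply_eq_zero_iff θ h1 hk).1 hz
    rw [rePart_eq_smul_imPart hcos, ulBlock_smul, lrBlock_smul,
      exists_mem_spectrum_smul_iff (hsin hcos)] at hcommon
    exact ⟨hcos, k, h1, hk, by simp [hnorm], hcommon⟩
  · rintro ⟨hcos, k, h1, hk, hξ, hcommon⟩
    refine ⟨k, h1, hk, (hA.rePart_apply_eq_zero_iff θ h1 hk).2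
      ⟨hcos, by simpa [sub_eq_zero] using hξ⟩, ?_⟩
    rwa [rePart_eq_smul_imPart hcos, ulBlock_smul, lrBlock_smul,
      exists_mem_spectrum_smul_iff (hsin hcos)]
end

section
/- Let A be a 4-by-4 reciprocal matrix. Then for all θ, λ ∈ ℝ, writing ρ = cos²θ: det(Re(e^{iθ}A) − λI₄) = λ⁴ − (ξ₁ + ξ₂ + ξ₃ + 3ρ)λ² + (ξ₁ + ρ)(ξ₃ + ρ). -/
/-!
`Re (e^{iθ} A)` is again tridiagonal with zero diagonal, so the determinant of
`Re (e^{iθ} A) - λ I₄` only involves `λ` and the products `p_j` of opposite off-diagonal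
entries: it equals `λ⁴ - (p₁ + p₂ + p₃) λ² + p₁ p₃`. Each entry of `Re (z A)` is
`(z a + conj (z b)) / 2` with `a b = 1`, and for `|z| = 1` the product of the two opposite
entries expands to `(z² + conj z² + |a|² + |b|²) / 4 = (|a| - |b|)² / 4 + (Re z)²`,
using `|a| |b| = 1` and `z conj z = 1`; with `z = e^{iθ}` this is `ξ_j + cos² θ`.
-/

open Matrix Polynomial

open ComplexConjugate

lemma RePart_apply {n : ℕ} (θ : ℝ) (A : Matrix (Fin n) (Fin n) ℂ) (i j : Fin n) :
    RePart θ A i j =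
      2⁻¹ * (Complex.exp (θ * Complex.I) * A i j + conj (Complex.exp (θ * Complex.I) * A j i)) := by
  simp [RePart]

lemma RePart_apply_eq_zero {n : ℕ} (θ : ℝ) {A : Matrix (Fin n) (Fin n) ℂ}
    (hA : ∀ i j : Fin n, ((i : ℤ) - (j : ℤ)) ^ 2 ≠ 1 → A i j = 0) (i j : Fin n)
    (hij : ((i : ℤ) - (j : ℤ)) ^ 2 ≠ 1) : RePart θ A i j = 0 := by
  have hji : ((j : ℤ) - (i : ℤ)) ^ 2 ≠ 1 := by rwa [← neg_sub, neg_sq]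
  rw [RePart_apply, hA i j hij, hA j i hji]
  simp

lemma mul_add_conj_mul_add_conj {z a b : ℂ} (hz : ‖z‖ = 1) (hab : a * b = 1) :
    2⁻¹ * (z * a + conj (z * b)) * (2⁻¹ * (z * b + conj (z * a))) =
      (((‖a‖ - ‖b‖) ^ 2 / 4 + z.re ^ 2 : ℝ) : ℂ) := by
  have hzz : z * conj z = 1 := by rw [Complex.mul_conj', hz]; norm_num
  have hnorm : (‖a‖ : ℂ) * ‖b‖ = 1 := by
    rw [← Complex.ofReal_mul, ← norm_mul, hab, norm_one, Complex.ofReal_one]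
  have hre := Complex.add_conj z
  push_cast at hre
  have hconj : conj a * conj b = 1 := by rw [← map_mul, hab, map_one]
  simp only [map_mul]
  push_cast
  linear_combination (4⁻¹ * z ^ 2) * hab + (4⁻¹ * conj z ^ 2) * hconj
    + (4⁻¹ * z * conj z) * (Complex.mul_conj' a + Complex.mul_conj' b)
    + (4⁻¹ * (‖a‖ ^ 2 + ‖b‖ ^ 2 : ℂ) - 2⁻¹) * hzz + 2⁻¹ * hnorm
    + (4⁻¹ * (z + conj z + 2 * z.re)) * hre

lemma RePart_mul_RePart_swap {n : ℕ} (θ : ℝ) {A : Matrix (Fin n) (Fin n) ℂ} {i j : Fin n}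
    (hij : A i j * A j i = 1) :
    RePart θ A i j * RePart θ A j i =
      (((‖A i j‖ - ‖A j i‖) ^ 2 / 4 + Real.cos θ ^ 2 : ℝ) : ℂ) := by
  rw [RePart_apply, RePart_apply, mul_add_conj_mul_add_conj (Complex.norm_exp_ofReal_mul_I θ) hij,
    Complex.exp_ofReal_mul_I_re]

lemma det_sub_smul_one_fin_four {R : Type*} [CommRing R] {M : Matrix (Fin 4) (Fin 4) R}
    (hM : ∀ i j : Fin 4, ((i : ℤ) - (j : ℤ)) ^ 2 ≠ 1 → M i j = 0) (t : R) :
    (M - t • 1).det =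
      t ^ 4 - (M 0 1 * M 1 0 + M 1 2 * M 2 1 + M 2 3 * M 3 2) * t ^ 2
        + M 0 1 * M 1 0 * (M 2 3 * M 3 2) := by
  simp [Fin.sum_univ_succ, Fin.succAbove, Matrix.det_succ_row_zero, Matrix.one_apply,
    hM 0 0 (by decide), hM 1 1 (by decide), hM 2 2 (by decide), hM 3 3 (by decide),
    hM 0 2 (by decide), hM 2 0 (by decide), hM 0 3 (by decide), hM 3 0 (by decide),
    hM 1 3 (by decide), hM 3 1 (by decide)]
  ring

/-- Kippenhahn polynomial of a 4-by-4 reciprocal matrix. -/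
theorem kippenhahn_poly_four (A : Matrix (Fin 4) (Fin 4) ℂ) (hA : IsReciprocal A)
    (ξ₁ ξ₂ ξ₃ : ℝ)
    (h1 : ξ₁ = (‖A 0 1‖ - ‖A 1 0‖) ^ 2 / 4)
    (h2 : ξ₂ = (‖A 1 2‖ - ‖A 2 1‖) ^ 2 / 4)
    (h3 : ξ₃ = (‖A 2 3‖ - ‖A 3 2‖) ^ 2 / 4) :
    ∀ θ lam : ℝ,
      (RePart θ A - (lam : ℂ) • 1).det =
        ((lam ^ 4 - (ξ₁ + ξ₂ + ξ₃ + 3 * Real.cos θ ^ 2) * lam ^ 2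
            + (ξ₁ + Real.cos θ ^ 2) * (ξ₃ + Real.cos θ ^ 2) : ℝ) : ℂ) := by
  intro θ lam
  obtain ⟨hzero, hrecip⟩ := hA
  rw [det_sub_smul_one_fin_four (RePart_apply_eq_zero θ hzero),
    RePart_mul_RePart_swap θ (hrecip 0 1 rfl), RePart_mul_RePart_swap θ (hrecip 1 2 rfl),
    RePart_mul_RePart_swap θ (hrecip 2 3 rfl), h1, h2, h3]
  push_cast
  ring
end

section
/- Let A be a 4-by-4 reciprocal matrix. There exist real numbers X, c and p ≠ 0 such that det(Re(e^{iθ}A) − λI₄) = λ⁴ − 2λ²((X² + p²)cos²θ + c²) + ((X² − p²)cos²θ + c²)² for all θ, λ ∈ ℝ if and only if ξ₂ = 0 and ξ₁ = ξ₃. Moreover, in that case the identity holds with X = √5/2, p = 1/2 and c = √ξ₁. (This is the criterion for the Kippenhahn curve of A to consist of two ellipses symmetric to each other about the origin.) -/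
/-!
Re(e^{iθ}A) is again tridiagonal with zero diagonal, so its characteristic polynomial only sees
the products of symmetric off-diagonal entries, and for a reciprocal pair `a b = 1` that product
is `cos² θ + (|a| - |b|)² / 4`. Hence
`det (Re(e^{iθ}A) - λ) = λ⁴ - λ² (3 cos² θ + ξ₁ + ξ₂ + ξ₃) + (cos² θ + ξ₁)(cos² θ + ξ₃)`.
Matching this with the two-ellipse form at `cos² θ ∈ {0, 1/2, 1}` gives `(X² - p²)² = 1`,
`ξ₁ ξ₃ = c⁴`, `ξ₁ + ξ₃ = 2 (X² - p²) c²` and `ξ₁ + ξ₂ + ξ₃ = 2 c²`, which for nonnegative `ξ`s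
leaves only `ξ₂ = 0`, `ξ₁ = ξ₃`.
-/

open Matrix Polynomial

open ComplexConjugate

theorem det_sub_smul_one_of_tridiagonal {R : Type*} [CommRing R] (M : Matrix (Fin 4) (Fin 4) R)
    (hM : ∀ i j : Fin 4, ((i : ℤ) - (j : ℤ)) ^ 2 ≠ 1 → M i j = 0) (lam : R) :
    (M - lam • 1).det = lam ^ 4 - lam ^ 2 * (M 0 1 * M 1 0 + M 1 2 * M 2 1 + M 2 3 * M 3 2)
      + M 0 1 * M 1 0 * (M 2 3 * M 3 2) := by
  simp (disch := decide) [det_succ_row_zero, Fin.sum_univ_succ, Fin.succAbove, hM, one_apply]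
  ring

theorem Complex.mul_conj_add_mul_conj_eq {e u v : ℂ} (he : ‖e‖ = 1) (huv : u * v = 1) :
    2⁻¹ * (e * u + conj e * conj v) * (2⁻¹ * (e * v + conj e * conj u))
      = ((e.re ^ 2 + (‖u‖ - ‖v‖) ^ 2 / 4 : ℝ) : ℂ) := by
  have hee : e * conj e = 1 := by
    rw [Complex.mul_conj, Complex.normSq_eq_norm_sq, he]; norm_num
  have hre : e + conj e = 2 * e.re := by rw [Complex.add_conj]; push_cast; ring
  have hcuv : conj u * conj v = 1 := by rw [← map_mul, huv, map_one]
  have hnorm : (‖u‖ : ℂ) * ‖v‖ = 1 := by rw [← Complex.ofReal_mul, ← norm_mul, huv]; simp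
  push_cast
  linear_combination (e ^ 2 / 4) * huv + (conj e ^ 2 / 4) * hcuv
    + (e * conj e / 4) * (Complex.mul_conj' u + Complex.mul_conj' v)
    + ((‖u‖ : ℂ) ^ 2 + (‖v‖ : ℂ) ^ 2 - 2) / 4 * hee
    + (e + conj e + 2 * e.re) / 4 * hre + (1 / 2) * hnorm

namespace RePart

variable {n : ℕ} (θ : ℝ) {A : Matrix (Fin n) (Fin n) ℂ}

theorem apply (A : Matrix (Fin n) (Fin n) ℂ) (i j : Fin n) :
    RePart θ A i j = 2⁻¹ * (Complex.exp (θ * Complex.I) * A i j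
      + conj (Complex.exp (θ * Complex.I)) * conj (A j i)) := by
  simp [RePart, conjTranspose_apply]

theorem apply_eq_zero {i j : Fin n} (hij : A i j = 0) (hji : A j i = 0) : RePart θ A i j = 0 := by
  simp [apply, hij, hji]

theorem apply_mul_apply_eq {i j : Fin n} (h : A i j * A j i = 1) :
    RePart θ A i j * RePart θ A j i
      = ((Real.cos θ ^ 2 + (‖A i j‖ - ‖A j i‖) ^ 2 / 4 : ℝ) : ℂ) := by
  rw [apply, apply, Complex.mul_conj_add_mul_conj_eq (Complex.norm_exp_ofReal_mul_I θ) h,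
    Complex.exp_ofReal_mul_I_re]

end RePart

theorem IsReciprocal.det_rePart_sub_smul_one {A : Matrix (Fin 4) (Fin 4) ℂ} (hA : IsReciprocal A)
    {ξ₁ ξ₂ ξ₃ : ℝ} (h1 : ξ₁ = (‖A 0 1‖ - ‖A 1 0‖) ^ 2 / 4)
    (h2 : ξ₂ = (‖A 1 2‖ - ‖A 2 1‖) ^ 2 / 4) (h3 : ξ₃ = (‖A 2 3‖ - ‖A 3 2‖) ^ 2 / 4)
    (θ lam : ℝ) :
    (RePart θ A - (lam : ℂ) • 1).det =
      ((lam ^ 4 - lam ^ 2 * (3 * Real.cos θ ^ 2 + (ξ₁ + ξ₂ + ξ₃))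
        + (Real.cos θ ^ 2 + ξ₁) * (Real.cos θ ^ 2 + ξ₃) : ℝ) : ℂ) := by
  obtain ⟨hzero, hone⟩ := hA
  have htri (i j : Fin 4) (hij : ((i : ℤ) - j) ^ 2 ≠ 1) : RePart θ A i j = 0 :=
    RePart.apply_eq_zero θ (hzero i j hij) (hzero j i (by rwa [← neg_sub, neg_sq]))
  rw [det_sub_smul_one_of_tridiagonal _ htri, RePart.apply_mul_apply_eq θ (hone 0 1 rfl),
    RePart.apply_mul_apply_eq θ (hone 1 2 rfl), RePart.apply_mul_apply_eq θ (hone 2 3 rfl),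
    ← h1, ← h2, ← h3]
  push_cast
  ring

theorem eq_and_add_eq_of_mul_eq_sq {x y d s : ℝ} (hx : 0 ≤ x) (hy : 0 ≤ y) (hd : 0 ≤ d)
    (hmul : x * y = d ^ 2) (hadd : x + y = 2 * s * d) (hs : s ^ 2 = 1) :
    x = y ∧ x + y = 2 * d := by
  rcases sq_eq_one_iff.mp hs with rfl | rfl
  · have hsq : (x - y) ^ 2 = 0 := by linear_combination (x + y + 2 * d) * hadd - 4 * hmul
    exact ⟨sub_eq_zero.mp (pow_eq_zero_iff two_ne_zero |>.mp hsq), by linarith⟩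
  · constructor <;> linarith

theorem eq_zero_and_eq_of_forall_quartic_eq {ξ₁ ξ₂ ξ₃ a s c : ℝ} (hξ₁ : 0 ≤ ξ₁) (hξ₃ : 0 ≤ ξ₃)
    (h : ∀ t ∈ Set.Icc (0 : ℝ) 1, ∀ lam : ℝ,
      lam ^ 4 - lam ^ 2 * (3 * t + (ξ₁ + ξ₂ + ξ₃)) + (t + ξ₁) * (t + ξ₃)
        = lam ^ 4 - 2 * lam ^ 2 * (a * t + c ^ 2) + (s * t + c ^ 2) ^ 2) :
    ξ₂ = 0 ∧ ξ₁ = ξ₃ := by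
  have h00 := h 0 (by norm_num) 0
  have h01 := h 0 (by norm_num) 1
  have h10 := h 1 (by norm_num) 0
  have hhalf := h (1 / 2) (by norm_num) 0
  have hmul : ξ₁ * ξ₃ = (c ^ 2) ^ 2 := by linear_combination h00
  have hsum : ξ₁ + ξ₂ + ξ₃ = 2 * c ^ 2 := by linear_combination hmul - h01
  -- the second difference at `t = 0, 1/2, 1` compares the `t²` coefficients `1` and `s²`
  have hs : s ^ 2 = 1 := by linear_combination -2 * h10 + 4 * hhalf - 2 * hmul
  have hadd : ξ₁ + ξ₃ = 2 * s * c ^ 2 := by linear_combination h10 - hmul + hs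
  obtain ⟨heq, hadd'⟩ := eq_and_add_eq_of_mul_eq_sq hξ₁ hξ₃ (sq_nonneg c) hmul hadd hs
  exact ⟨by linarith, heq⟩

/-- Criterion for the Kippenhahn curve of a 4-by-4 reciprocal matrix to consist of
two ellipses symmetric to each other about the origin. -/
theorem two_noncentral_ellipses_four (A : Matrix (Fin 4) (Fin 4) ℂ) (hA : IsReciprocal A)
    (ξ₁ ξ₂ ξ₃ : ℝ)
    (h1 : ξ₁ = (‖A 0 1‖ - ‖A 1 0‖) ^ 2 / 4)
    (h2 : ξ₂ = (‖A 1 2‖ - ‖A 2 1‖) ^ 2 / 4)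
    (h3 : ξ₃ = (‖A 2 3‖ - ‖A 3 2‖) ^ 2 / 4) :
    ((∃ X c p : ℝ, p ≠ 0 ∧ ∀ θ lam : ℝ,
      (RePart θ A - (lam : ℂ) • 1).det =
        ((lam ^ 4 - 2 * lam ^ 2 * ((X ^ 2 + p ^ 2) * Real.cos θ ^ 2 + c ^ 2)
            + ((X ^ 2 - p ^ 2) * Real.cos θ ^ 2 + c ^ 2) ^ 2 : ℝ) : ℂ)) ↔
      (ξ₂ = 0 ∧ ξ₁ = ξ₃)) ∧
    (ξ₂ = 0 ∧ ξ₁ = ξ₃ → ∀ θ lam : ℝ,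
      (RePart θ A - (lam : ℂ) • 1).det =
        ((lam ^ 4
            - 2 * lam ^ 2 * (((Real.sqrt 5 / 2) ^ 2 + (1 / 2) ^ 2) * Real.cos θ ^ 2
              + Real.sqrt ξ₁ ^ 2)
            + (((Real.sqrt 5 / 2) ^ 2 - (1 / 2) ^ 2) * Real.cos θ ^ 2
              + Real.sqrt ξ₁ ^ 2) ^ 2 : ℝ) : ℂ)) := by
  have hdet := hA.det_rePart_sub_smul_one h1 h2 h3
  have hξ₁ : 0 ≤ ξ₁ := h1 ▸ by positivity
  have hξ₃ : 0 ≤ ξ₃ := h3 ▸ by positivity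
  have hellipses (hξ : ξ₂ = 0 ∧ ξ₁ = ξ₃) (θ lam : ℝ) : (RePart θ A - (lam : ℂ) • 1).det =
      ((lam ^ 4 - 2 * lam ^ 2 * (((√5 / 2) ^ 2 + (1 / 2) ^ 2) * Real.cos θ ^ 2 + √ξ₁ ^ 2)
        + (((√5 / 2) ^ 2 - (1 / 2) ^ 2) * Real.cos θ ^ 2 + √ξ₁ ^ 2) ^ 2 : ℝ) : ℂ) := by
    rw [hdet, div_pow, Real.sq_sqrt (by norm_num), Real.sq_sqrt hξ₁, hξ.1, ← hξ.2]
    congr 1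
    ring
  refine ⟨⟨?_, fun hξ => ⟨√5 / 2, √ξ₁, 1 / 2, by norm_num, hellipses hξ⟩⟩, hellipses⟩
  rintro ⟨X, c, p, -, hid⟩
  refine eq_zero_and_eq_of_forall_quartic_eq (a := X ^ 2 + p ^ 2) (s := X ^ 2 - p ^ 2) (c := c)
    hξ₁ hξ₃ fun t ht lam => ?_
  obtain ⟨θ, rfl⟩ : ∃ θ, Real.cos θ ^ 2 = t := ⟨Real.arccos √t, by
    rw [Real.cos_arccos (by linarith [Real.sqrt_nonneg t]) (Real.sqrt_le_one.mpr ht.2),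
      Real.sq_sqrt ht.1]⟩
  exact_mod_cast (hdet θ lam).symm.trans (hid θ lam)
end
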